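/- arXiv:1805.10524 — 5 statements merged into one kernel-verified Lean document; each statement's English description precedes it below -/
import Mathlib

section
/- Let A be a commutative unital associative real algebra on R^n, U ⊆ R^k open, φ : U → A differentiable. If f, g : U → A are φA-differentiable with derivatives f'_φ and g'_φ, then the pointwise A-product f·g is φA-differentiable with derivative f'_φ·g + f·g'_φ (Leibniz rule). -/
theorem fderiv_mul_apply_eq_of_fderiv_eq_mul {𝕜 E A : Type*} [NontriviallyNormedField 𝕜]
    [NormedAddCommGroup E] [NormedSpace 𝕜 E] [NormedCommRing A] [NormedAlgebra 𝕜 A]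
    {φ f g : E → A} {u : E} {a b : A}
    (hf : DifferentiableAt 𝕜 f u) (hg : DifferentiableAt 𝕜 g u)
    (hfa : ∀ ξ, fderiv 𝕜 f u ξ = a * fderiv 𝕜 φ u ξ)
    (hgb : ∀ ξ, fderiv 𝕜 g u ξ = b * fderiv 𝕜 φ u ξ) (ξ : E) :
    fderiv 𝕜 (fun x => f x * g x) u ξ = (a * g u + f u * b) * fderiv 𝕜 φ u ξ := by
  rw [fderiv_fun_mul hf hg]
  simp only [add_apply, smul_apply, smul_eq_mul, hfa, hgb]
  ring

theorem stmt_2_general {k : ℕ} {A : Type*} [NormedCommRing A] [NormedAlgebra ℝ A]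
    (U : Set (EuclideanSpace ℝ (Fin k))) (hU : IsOpen U)
    (φ f g : EuclideanSpace ℝ (Fin k) → A) (f' g' : EuclideanSpace ℝ (Fin k) → A)
    (hf : DifferentiableOn ℝ f U)
    (hg : DifferentiableOn ℝ g U)
    (hf' : ∀ u ∈ U, ∀ ξ, fderiv ℝ f u ξ = f' u * fderiv ℝ φ u ξ)
    (hg' : ∀ u ∈ U, ∀ ξ, fderiv ℝ g u ξ = g' u * fderiv ℝ φ u ξ) :
    DifferentiableOn ℝ (fun u => f u * g u) U ∧
      ∀ u ∈ U, ∀ ξ, fderiv ℝ (fun u => f u * g u) u ξ =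
        (f' u * g u + f u * g' u) * fderiv ℝ φ u ξ :=
  ⟨hf.mul hg, fun u hu =>
    fderiv_mul_apply_eq_of_fderiv_eq_mul (hf.differentiableAt (hU.mem_nhds hu))
      (hg.differentiableAt (hU.mem_nhds hu)) (hf' u hu) (hg' u hu)⟩

/-- Leibniz rule for the φA-derivative. -/
theorem stmt_2 {k : ℕ} {A : Type*} [NormedCommRing A] [NormedAlgebra ℝ A]
    (U : Set (EuclideanSpace ℝ (Fin k))) (hU : IsOpen U)
    (φ f g : EuclideanSpace ℝ (Fin k) → A) (f' g' : EuclideanSpace ℝ (Fin k) → A)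
    (hφ : DifferentiableOn ℝ φ U)
    (hf : DifferentiableOn ℝ f U)
    (hg : DifferentiableOn ℝ g U)
    (hf' : ∀ u ∈ U, ∀ ξ, fderiv ℝ f u ξ = f' u * fderiv ℝ φ u ξ)
    (hg' : ∀ u ∈ U, ∀ ξ, fderiv ℝ g u ξ = g' u * fderiv ℝ φ u ξ) :
    DifferentiableOn ℝ (fun u => f u * g u) U ∧
      ∀ u ∈ U, ∀ ξ, fderiv ℝ (fun u => f u * g u) u ξ =
        (f' u * g u + f u * g' u) * fderiv ℝ φ u ξ :=
  stmt_2_general U hU φ f g f' g' hf hg hf' hg'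
end

section
/- Let A be a commutative unital associative real algebra on R^n, Ω ⊆ R^n open, g : Ω → A Lorch A-differentiable with A-derivative g' (i.e. dg_x(h) = g'(x)·h for all h ∈ A), U ⊆ R^k open, φ : U → A differentiable, f : U → A φA-differentiable with f(U) ⊆ Ω. Then g ∘ f is φA-differentiable with φA-derivative (g' ∘ f) · f'_φ. -/
theorem fderiv_comp_apply_eq_mul_mul_fderiv {𝕜 E A : Type*} [NontriviallyNormedField 𝕜]
    [NormedAddCommGroup E] [NormedSpace 𝕜 E] [NormedRing A] [NormedAlgebra 𝕜 A]
    {g : A → A} {φ f : E → A} {u : E} {a b : A}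
    (hg : DifferentiableAt 𝕜 g (f u)) (hf : DifferentiableAt 𝕜 f u)
    (hg' : ∀ h, fderiv 𝕜 g (f u) h = a * h) (hf' : ∀ ξ, fderiv 𝕜 f u ξ = b * fderiv 𝕜 φ u ξ)
    (ξ : E) : fderiv 𝕜 (g ∘ f) u ξ = (a * b) * fderiv 𝕜 φ u ξ := by
  rw [fderiv_comp u hg hf, ContinuousLinearMap.comp_apply, hg', hf', mul_assoc]

theorem stmt_4_general {k : ℕ} {A : Type*} [NormedCommRing A] [NormedAlgebra ℝ A]
    (Ω : Set A) (hΩ : IsOpen Ω) (g g' : A → A)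
    (hgd : DifferentiableOn ℝ g Ω)
    (hg' : ∀ x ∈ Ω, ∀ h : A, fderiv ℝ g x h = g' x * h)
    (U : Set (EuclideanSpace ℝ (Fin k))) (hU : IsOpen U)
    (φ f : EuclideanSpace ℝ (Fin k) → A) (f' : EuclideanSpace ℝ (Fin k) → A)
    (hf : DifferentiableOn ℝ f U)
    (hf' : ∀ u ∈ U, ∀ ξ, fderiv ℝ f u ξ = f' u * fderiv ℝ φ u ξ)
    (him : Set.MapsTo f U Ω) :
    DifferentiableOn ℝ (g ∘ f) U ∧
      ∀ u ∈ U, ∀ ξ, fderiv ℝ (g ∘ f) u ξ = (g' (f u) * f' u) * fderiv ℝ φ u ξ := by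
  refine ⟨hgd.comp hf him, fun u hu ξ ↦ ?_⟩
  exact fderiv_comp_apply_eq_mul_mul_fderiv
    (hgd.differentiableAt (hΩ.mem_nhds (him hu))) (hf.differentiableAt (hU.mem_nhds hu))
    (hg' (f u) (him hu)) (hf' u hu) ξ

/-- chain rule: Lorch-differentiable after φA-differentiable. -/
theorem stmt_4 {k : ℕ} {A : Type*} [NormedCommRing A] [NormedAlgebra ℝ A]
    (Ω : Set A) (hΩ : IsOpen Ω) (g g' : A → A)
    (hgd : DifferentiableOn ℝ g Ω)
    (hg' : ∀ x ∈ Ω, ∀ h : A, fderiv ℝ g x h = g' x * h)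
    (U : Set (EuclideanSpace ℝ (Fin k))) (hU : IsOpen U)
    (φ f : EuclideanSpace ℝ (Fin k) → A) (f' : EuclideanSpace ℝ (Fin k) → A)
    (hφ : DifferentiableOn ℝ φ U)
    (hf : DifferentiableOn ℝ f U)
    (hf' : ∀ u ∈ U, ∀ ξ, fderiv ℝ f u ξ = f' u * fderiv ℝ φ u ξ)
    (him : Set.MapsTo f U Ω) :
    DifferentiableOn ℝ (g ∘ f) U ∧
      ∀ u ∈ U, ∀ ξ, fderiv ℝ (g ∘ f) u ξ = (g' (f u) * f' u) * fderiv ℝ φ u ξ :=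
  stmt_4_general Ω hΩ g g' hgd hg' U hU φ f f' hf hf' him
end

section
/- Let A be a commutative unital associative real algebra on R^n with first fundamental representation R : A → M(n,R) (the injective algebra homomorphism sending a to the matrix of multiplication by a). Let U ⊆ R^n be open and φ : U → R^n a diffeomorphism onto its image. Then the following are equivalent for a differentiable f : U → R^n: (a) f is φA-differentiable on U; (b) g = f ∘ φ^{-1} is Lorch A-differentiable on φ(U); (c) for all u ∈ U, the matrix Jf_u (Jφ_u)^{-1} belongs to the image R(A), where Jf and Jφ denote Jacobian matrices. -/
/-!
At each `u ∈ U` the differentials `D = dφ_u` and `E = d(φ⁻¹)_{φ u}` are mutually inverse, and the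
chain rule gives `dg_{φ u} = df_u ∘ E` for `g = f ∘ φ⁻¹`. Hence `df_u = a · D` holds exactly when
`df_u ∘ E = a ·`, i.e. when `dg_{φ u}` is multiplication by `a`; choosing such an `a` at every point
turns these pointwise statements into the existence of `f'` and `g'`.
-/

open Filter Topology

theorem exists_fun_forall_mem_iff {α β : Type*} [Nonempty β] {s : Set α} {P : α → β → Prop} :
    (∃ f : α → β, ∀ x ∈ s, P x (f x)) ↔ ∀ x ∈ s, ∃ b, P x b := by
  refine ⟨fun ⟨f, hf⟩ x hx => ⟨f x, hf x hx⟩, fun h => ?_⟩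
  choose! f hf using h
  exact ⟨f, hf⟩

theorem exists_mul_comp_iff_exists_comp_eq_mul {X A : Type*} [Mul A] {L M : X → A} {N : A → X}
    (hl : Function.LeftInverse N M) (hr : Function.RightInverse N M) :
    (∃ a, ∀ ξ, L ξ = a * M ξ) ↔ ∃ a, ∀ ξ, L (N ξ) = a * ξ :=
  ⟨fun ⟨a, ha⟩ => ⟨a, fun ξ => by rw [ha, hr ξ]⟩,
    fun ⟨a, ha⟩ => ⟨a, fun ξ => by rw [← ha, hl ξ]⟩⟩

theorem fderiv_leftInverse_of_eventuallyEq {𝕜 E F : Type*} [NontriviallyNormedField 𝕜]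
    [NormedAddCommGroup E] [NormedSpace 𝕜 E] [NormedAddCommGroup F] [NormedSpace 𝕜 F]
    {f : E → F} {g : F → E} {x : E} (hgf : g ∘ f =ᶠ[𝓝 x] id)
    (hg : DifferentiableAt 𝕜 g (f x)) (hf : DifferentiableAt 𝕜 f x) :
    Function.LeftInverse (fderiv 𝕜 g (f x)) (fderiv 𝕜 f x) := by
  have h : fderiv 𝕜 (g ∘ f) x = fderiv 𝕜 id x := hgf.fderiv_eq
  rw [fderiv_comp x hg hf, fderiv_id] at h
  exact fun ξ => congrArg (· ξ) h

theorem Set.LeftInvOn.eventuallyEq_comp_of_isOpen_image {X Y : Type*} [TopologicalSpace Y]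
    {f : X → Y} {g : Y → X} {s : Set X} (hgf : Set.LeftInvOn g f s) (hs : IsOpen (f '' s))
    {x : X} (hx : x ∈ s) : f ∘ g =ᶠ[𝓝 (f x)] id := by
  filter_upwards [hs.mem_nhds ⟨x, hx, rfl⟩] using hgf.rightInvOn_image

theorem stmt_6_general {A : Type*} [NormedCommRing A] [NormedAlgebra ℝ A]
    (U : Set A) (hU : IsOpen U)
    (φ φinv : A → A)
    (hφ : DifferentiableOn ℝ φ U)
    (hopen : IsOpen (φ '' U))
    (hinv : DifferentiableOn ℝ φinv (φ '' U))
    (hleft : ∀ u ∈ U, φinv (φ u) = u)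
    (f : A → A) (hf : DifferentiableOn ℝ f U) :
    ((∃ f' : A → A, ∀ u ∈ U, ∀ ξ : A, fderiv ℝ f u ξ = f' u * fderiv ℝ φ u ξ) ↔
      (DifferentiableOn ℝ (f ∘ φinv) (φ '' U) ∧
        ∃ g' : A → A, ∀ p ∈ φ '' U, ∀ h : A, fderiv ℝ (f ∘ φinv) p h = g' p * h)) ∧
    ((∃ f' : A → A, ∀ u ∈ U, ∀ ξ : A, fderiv ℝ f u ξ = f' u * fderiv ℝ φ u ξ) ↔
      (∀ u ∈ U, ∃ a : A, ∀ ξ : A,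
        fderiv ℝ f u (fderiv ℝ φinv (φ u) ξ) = a * ξ)) := by
  have hleftOn : Set.LeftInvOn φinv φ U := hleft
  have hφat : ∀ u ∈ U, DifferentiableAt ℝ φ u :=
    fun u hu => hφ.differentiableAt (hU.mem_nhds hu)
  have hinvat : ∀ u ∈ U, DifferentiableAt ℝ φinv (φ u) :=
    fun u hu => hinv.differentiableAt (hopen.mem_nhds ⟨u, hu, rfl⟩)
  have hdinvLeft : ∀ u ∈ U, Function.LeftInverse (fderiv ℝ φinv (φ u)) (fderiv ℝ φ u) :=
    fun u hu => fderiv_leftInverse_of_eventuallyEq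
      (eventually_of_mem (hU.mem_nhds hu) hleft) (hinvat u hu) (hφat u hu)
  have hdinvRight : ∀ u ∈ U, Function.RightInverse (fderiv ℝ φinv (φ u)) (fderiv ℝ φ u) := by
    intro u hu
    have h := fderiv_leftInverse_of_eventuallyEq (𝕜 := ℝ)
      (hleftOn.eventuallyEq_comp_of_isOpen_image hopen hu)
      (by rw [hleft u hu]; exact hφat u hu) (hinvat u hu)
    rwa [hleft u hu] at h
  have hchain : ∀ u ∈ U, ∀ ξ : A,
      fderiv ℝ (f ∘ φinv) (φ u) ξ = fderiv ℝ f u (fderiv ℝ φinv (φ u) ξ) := by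
    intro u hu ξ
    rw [fderiv_comp (φ u) (by rw [hleft u hu]; exact hf.differentiableAt (hU.mem_nhds hu))
      (hinvat u hu), hleft u hu]
    rfl
  have hac := exists_fun_forall_mem_iff.trans <|
    forall₂_congr fun u hu =>
      exists_mul_comp_iff_exists_comp_eq_mul (L := fderiv ℝ f u) (hdinvLeft u hu) (hdinvRight u hu)
  refine ⟨?_, hac⟩
  rw [hac, and_iff_right (hf.comp hinv (hleftOn.mapsTo (Set.surjOn_image φ U))),
    exists_fun_forall_mem_iff (P := fun p b => ∀ h, fderiv ℝ (f ∘ φinv) p h = b * h),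
    Set.forall_mem_image]
  exact forall₂_congr fun u hu => by simp only [hchain u hu]

/-- equivalence of (a) φA-differentiability, (b) Lorch
A-differentiability of f ∘ φ⁻¹, and (c) Jf_u (Jφ_u)⁻¹ ∈ R(A). -/
theorem stmt_6 {A : Type*} [NormedCommRing A] [NormedAlgebra ℝ A]
    (U : Set A) (hU : IsOpen U)
    (φ φinv : A → A)
    (hφ : DifferentiableOn ℝ φ U)
    (hopen : IsOpen (φ '' U))
    (hinv : DifferentiableOn ℝ φinv (φ '' U))
    (hleft : ∀ u ∈ U, φinv (φ u) = u)
    (hright : ∀ p ∈ φ '' U, φ (φinv p) = p)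
    (f : A → A) (hf : DifferentiableOn ℝ f U) :
    ((∃ f' : A → A, ∀ u ∈ U, ∀ ξ : A, fderiv ℝ f u ξ = f' u * fderiv ℝ φ u ξ) ↔
      (DifferentiableOn ℝ (f ∘ φinv) (φ '' U) ∧
        ∃ g' : A → A, ∀ p ∈ φ '' U, ∀ h : A, fderiv ℝ (f ∘ φinv) p h = g' p * h)) ∧
    ((∃ f' : A → A, ∀ u ∈ U, ∀ ξ : A, fderiv ℝ f u ξ = f' u * fderiv ℝ φ u ξ) ↔
      (∀ u ∈ U, ∃ a : A, ∀ ξ : A,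
        fderiv ℝ f u (fderiv ℝ φinv (φ u) ξ) = a * ξ)) :=
  stmt_6_general U hU φ φinv hφ hopen hinv hleft f hf
end

section
/- Let A be a commutative unital associative real algebra on R^n, U ⊆ R^k open with k ≥ 2, φ : U → A differentiable, and f : U → A φA-differentiable. Then for all 1 ≤ i, j ≤ k and all u ∈ U, the generalized Cauchy–Riemann equations hold: dφ_u(e_j) · ∂f/∂u_i (u) = dφ_u(e_i) · ∂f/∂u_j (u), where e_1,…,e_k is the standard basis of R^k, ∂f/∂u_i denotes the partial derivative of f in direction e_i, and · is the product in A. -/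
theorem stmt_8_general {k : ℕ} {A : Type*} [NormedCommRing A] [NormedAlgebra ℝ A]
    (U : Set (EuclideanSpace ℝ (Fin k)))
    (φ f : EuclideanSpace ℝ (Fin k) → A) (f' : EuclideanSpace ℝ (Fin k) → A)
    (hf' : ∀ u ∈ U, ∀ ξ, fderiv ℝ f u ξ = f' u * fderiv ℝ φ u ξ) :
    ∀ u ∈ U, ∀ i j : Fin k,
      fderiv ℝ φ u (EuclideanSpace.single j (1 : ℝ)) *
          fderiv ℝ f u (EuclideanSpace.single i (1 : ℝ)) =
        fderiv ℝ φ u (EuclideanSpace.single i (1 : ℝ)) *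
          fderiv ℝ f u (EuclideanSpace.single j (1 : ℝ)) := by
  intro u hu i j
  rw [hf' u hu, hf' u hu]
  ring

/-- φA-differentiability implies the generalized Cauchy-Riemann
equations dφ(e_j) · f_{u_i} = dφ(e_i) · f_{u_j}. -/
theorem stmt_8 {k : ℕ} {A : Type*} [NormedCommRing A] [NormedAlgebra ℝ A]
    (hk : 2 ≤ k)
    (U : Set (EuclideanSpace ℝ (Fin k))) (hU : IsOpen U)
    (φ f : EuclideanSpace ℝ (Fin k) → A) (f' : EuclideanSpace ℝ (Fin k) → A)
    (hφ : DifferentiableOn ℝ φ U)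
    (hf : DifferentiableOn ℝ f U)
    (hf' : ∀ u ∈ U, ∀ ξ, fderiv ℝ f u ξ = f' u * fderiv ℝ φ u ξ) :
    ∀ u ∈ U, ∀ i j : Fin k,
      fderiv ℝ φ u (EuclideanSpace.single j (1 : ℝ)) *
          fderiv ℝ f u (EuclideanSpace.single i (1 : ℝ)) =
        fderiv ℝ φ u (EuclideanSpace.single i (1 : ℝ)) *
          fderiv ℝ f u (EuclideanSpace.single j (1 : ℝ)) :=
  stmt_8_general U φ f f' hf'
end

section
/- Let A be a commutative unital associative real algebra on R^n, U ⊆ R^k open with k ≥ 2, φ : U → A differentiable, and f : U → A differentiable in the usual sense. Suppose that for every u ∈ U there exists ξ_u ∈ R^k with ‖ξ_u‖ = 1 such that dφ_u(ξ_u) is a regular element of A. If f satisfies the generalized Cauchy–Riemann equations dφ_u(e_j)·∂f/∂u_i(u) = dφ_u(e_i)·∂f/∂u_j(u) for all 1 ≤ i, j ≤ k and all u ∈ U, then f is φA-differentiable on U, with φA-derivative f'_φ(u) = (∂f/∂ξ_u)(u) · (dφ_u(ξ_u))^{-1} where ∂f/∂ξ_u = df_u(ξ_u). -/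
/-!
The Cauchy–Riemann relations say that the bilinear map `(v, w) ↦ dφ v * df w` is symmetric on
pairs of basis vectors, hence symmetric everywhere. Taking `v = ξ` with `dφ ξ` invertible gives
`df η = df ξ * (dφ ξ)⁻¹ * dφ η` for every `η`.
-/

theorem LinearMap.mul_apply_comm_of_basis {R ι E A : Type*} [CommSemiring R] [AddCommMonoid E]
    [Module R E] [Semiring A] [Algebra R A] (b : Module.Basis ι R E) (L M : E →ₗ[R] A)
    (h : ∀ i j, L (b j) * M (b i) = L (b i) * M (b j)) (v w : E) :
    L v * M w = L w * M v := by
  have hsymm : (LinearMap.mul R A).compl₁₂ L M = ((LinearMap.mul R A).compl₁₂ L M).flip :=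
    LinearMap.ext_basis b b fun i j => by simpa using (h i j).symm
  exact congr($hsymm v w)

theorem LinearMap.apply_eq_mul_inverse_mul_of_mul_apply_comm {R E A : Type*} [CommSemiring R]
    [AddCommMonoid E] [Module R E] [CommRing A] [Algebra R A] {L M : E →ₗ[R] A}
    (hLM : ∀ v w, L v * M w = L w * M v) {ξ : E} (hξ : IsUnit (L ξ)) (η : E) :
    M η = M ξ * Ring.inverse (L ξ) * L η :=
  calc M η = Ring.inverse (L ξ) * (L ξ * M η) := by
          rw [← mul_assoc, Ring.inverse_mul_cancel _ hξ, one_mul]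
    _ = M ξ * Ring.inverse (L ξ) * L η := by rw [hLM]; ring

theorem stmt_9_general {k : ℕ} {A : Type*} [NormedCommRing A] [NormedAlgebra ℝ A]
    (U : Set (EuclideanSpace ℝ (Fin k)))
    (φ f : EuclideanSpace ℝ (Fin k) → A)
    (hCRE : ∀ u ∈ U, ∀ i j : Fin k,
      fderiv ℝ φ u (EuclideanSpace.single j (1 : ℝ)) *
          fderiv ℝ f u (EuclideanSpace.single i (1 : ℝ)) =
        fderiv ℝ φ u (EuclideanSpace.single i (1 : ℝ)) *
          fderiv ℝ f u (EuclideanSpace.single j (1 : ℝ))) :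
    ∀ u ∈ U, ∀ ξ, ‖ξ‖ = 1 → IsUnit (fderiv ℝ φ u ξ) →
      ∀ η, fderiv ℝ f u η =
        (fderiv ℝ f u ξ * Ring.inverse (fderiv ℝ φ u ξ)) * fderiv ℝ φ u η := by
  intro u hu ξ _ hξ
  have hsymm := LinearMap.mul_apply_comm_of_basis (EuclideanSpace.basisFun (Fin k) ℝ).toBasis
    (fderiv ℝ φ u : _ →ₗ[ℝ] A) (fderiv ℝ f u) (by simpa using hCRE u hu)
  exact LinearMap.apply_eq_mul_inverse_mul_of_mul_apply_comm hsymm hξ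

/-- generalized Cauchy-Riemann equations plus a regular direction
imply φA-differentiability, with the stated formula for the derivative. -/
theorem stmt_9 {k : ℕ} {A : Type*} [NormedCommRing A] [NormedAlgebra ℝ A]
    (hk : 2 ≤ k)
    (U : Set (EuclideanSpace ℝ (Fin k))) (hU : IsOpen U)
    (φ f : EuclideanSpace ℝ (Fin k) → A)
    (hφ : DifferentiableOn ℝ φ U)
    (hf : DifferentiableOn ℝ f U)
    (hreg : ∀ u ∈ U, ∃ ξ, ‖ξ‖ = 1 ∧ IsUnit (fderiv ℝ φ u ξ))
    (hCRE : ∀ u ∈ U, ∀ i j : Fin k,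
      fderiv ℝ φ u (EuclideanSpace.single j (1 : ℝ)) *
          fderiv ℝ f u (EuclideanSpace.single i (1 : ℝ)) =
        fderiv ℝ φ u (EuclideanSpace.single i (1 : ℝ)) *
          fderiv ℝ f u (EuclideanSpace.single j (1 : ℝ))) :
    ∀ u ∈ U, ∀ ξ, ‖ξ‖ = 1 → IsUnit (fderiv ℝ φ u ξ) →
      ∀ η, fderiv ℝ f u η =
        (fderiv ℝ f u ξ * Ring.inverse (fderiv ℝ φ u ξ)) * fderiv ℝ φ u η :=
  stmt_9_general U φ f hCRE
end
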